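/- arXiv:1706.06493 — 4 statements merged into one kernel-verified Lean document; each statement's English description precedes it below -/
import Mathlib

section
/- Let {u_t}_{t≥0} be a nonnegative real sequence satisfying (u_{t+1})² ≤ C(u_t - u_{t+1}) for some constant C > 0 and all t ≥ 0. Then for all t ≥ 1, u_t ≤ max(2C, √(C·u_0)) / t. -/
/-- If a nonnegative sequence satisfies `(u_{t+1})² ≤ C(u_t - u_{t+1})` with `C > 0`,
then `u_t ≤ max(2C, √(C u_0)) / t` for all `t ≥ 1`. -/
theorem recursive_seq_rate (u : ℕ → ℝ) (C : ℝ) (hC : 0 < C)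
    (hu : ∀ t, 0 ≤ u t) (hrec : ∀ t, (u (t + 1)) ^ 2 ≤ C * (u t - u (t + 1))) :
    ∀ t : ℕ, 1 ≤ t → u t ≤ max (2 * C) (Real.sqrt (C * u 0)) / t := by
  set M : ℝ := max (2 * C) (Real.sqrt (C * u 0)) with hMdef
  have hM2C : 2 * C ≤ M := le_max_left _ _
  have hMs : Real.sqrt (C * u 0) ≤ M := le_max_right _ _
  intro t ht
  induction t with
  | zero => omega
  | succ n ih =>
    rcases Nat.eq_or_lt_of_le ht with h1 | h1
    · -- base case n + 1 = 1
      have hn : n = 0 := by omega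
      subst hn
      have hs : Real.sqrt (C * u 0) ^ 2 = C * u 0 :=
        Real.sq_sqrt (mul_nonneg hC.le (hu 0))
      have hns : 0 ≤ Real.sqrt (C * u 0) := Real.sqrt_nonneg _
      have h1 : u 1 ≤ Real.sqrt (C * u 0) := by
        nlinarith [hrec 0, hu 0, hu 1]
      have hc1 : ((0 + 1 : ℕ) : ℝ) = 1 := by norm_num
      rw [hc1, div_one]
      linarith
    · have hn1 : 1 ≤ n := by omega
      have IH := ih hn1
      by_contra hcon
      push_neg at hcon
      set s : ℝ := (n : ℝ) with hsdef
      have hs1 : (1 : ℝ) ≤ s := Nat.one_le_cast.mpr hn1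
      have hs0 : 0 < s := by linarith
      have hIH : u n * s ≤ M := (le_div_iff₀ hs0).mp IH
      have hcast : ((n + 1 : ℕ) : ℝ) = s + 1 := by push_cast; ring
      rw [hcast] at hcon
      have hcon' : M < u (n + 1) * (s + 1) := by
        have := (div_lt_iff₀ (by linarith : (0:ℝ) < s + 1)).mp hcon
        linarith
      have hb : 0 ≤ u (n + 1) := hu _
      have hr := hrec n
      nlinarith [mul_pos hC hs0, mul_nonneg hb hs0.le,
        mul_lt_mul_of_pos_right hcon' (mul_pos hC hs0),
        mul_le_mul_of_nonneg_right hIH (by positivity : (0:ℝ) ≤ C * (s + 1)),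
        mul_lt_mul_of_pos_right hcon' (show (0:ℝ) < M * s by nlinarith)]
end

section
/- Every L-stationary point of the sparse problem min f(x) + λ‖x‖₀ + I_{[-ρ1,ρ1]}(x) is a basic stationary point, i.e., x̀_S = argmin_{z ∈ [-ρ1,ρ1]^{|S|}} (L/2)‖z - (x̀ - ∇f(x̀)/L)_S‖₂² where S = {i : x̀_i ≠ 0}. -/
open RealInnerProductSpace

/-- `‖v‖₀`: number of nonzero components. -/
noncomputable def l0norm {n : ℕ} (v : EuclideanSpace ℝ (Fin n)) : ℕ :=
  (Finset.univ.filter fun i => v i ≠ 0).card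

/-!
Test the `L`-stationarity inequality with `w = z_S`, i.e. `z` on the support `S` of `x̀` and `0`
off it. Then `‖w‖₀ ≤ ‖x̀‖₀`, so the `λ‖·‖₀` terms can be dropped, and `w - x̀` vanishes off `S`,
so what remains is `0 ≤ ∑_{i ∈ S} (∇f(x̀)ᵢ (zᵢ - x̀ᵢ) + L/2 (zᵢ - x̀ᵢ)²)`. Completing the square
turns the summand into `L/2 (zᵢ - (x̀ - ∇f(x̀)/L)ᵢ)² - L/2 (x̀ᵢ - (x̀ - ∇f(x̀)/L)ᵢ)²`.
-/

section SupportedVectors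

variable {ι : Type*} [Fintype ι] {S : Finset ι} {v : EuclideanSpace ℝ ι}

theorem inner_eq_sum_of_eq_zero_off (a : EuclideanSpace ℝ ι) (hv : ∀ i ∉ S, v i = 0) :
    ⟪a, v⟫ = ∑ i ∈ S, a i * v i := by
  rw [PiLp.inner_apply, ← Finset.sum_subset (Finset.subset_univ S) fun i _ hi => by simp [hv i hi]]
  simp [mul_comm]

theorem norm_sq_eq_sum_of_eq_zero_off (hv : ∀ i ∉ S, v i = 0) :
    ‖v‖ ^ 2 = ∑ i ∈ S, v i ^ 2 := by
  rw [← real_inner_self_eq_norm_sq, inner_eq_sum_of_eq_zero_off v hv]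
  simp only [sq]

end SupportedVectors

section RestrictToSupport

variable {n : ℕ} (x z : EuclideanSpace ℝ (Fin n))

noncomputable def restrictToSupport : EuclideanSpace ℝ (Fin n) :=
  WithLp.toLp 2 fun i => if x i ≠ 0 then z i else 0

theorem restrictToSupport_apply (i : Fin n) :
    restrictToSupport x z i = if x i ≠ 0 then z i else 0 := rfl

theorem l0norm_restrictToSupport_le : l0norm (restrictToSupport x z) ≤ l0norm x :=
  Finset.card_le_card fun i => by simp +contextual [restrictToSupport_apply]

theorem abs_restrictToSupport_le {ρ : ℝ} (hρ : 0 ≤ ρ) (hz : ∀ i, |z i| ≤ ρ) (i : Fin n) :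
    |restrictToSupport x z i| ≤ ρ := by
  rw [restrictToSupport_apply]
  split_ifs
  exacts [hz i, by simpa using hρ]

theorem restrictToSupport_sub_apply_of_eq_zero {i : Fin n} (hi : x i = 0) :
    (restrictToSupport x z - x) i = 0 := by
  simp [restrictToSupport_apply, hi]

theorem restrictToSupport_sub_apply_of_ne_zero {i : Fin n} (hi : x i ≠ 0) :
    (restrictToSupport x z - x) i = z i - x i := by
  simp [restrictToSupport_apply, hi]

end RestrictToSupport

theorem half_mul_sq_sub_shift_sub (L c x z : ℝ) (hL : L ≠ 0) :
    L / 2 * (z - (x - c / L)) ^ 2 - L / 2 * (x - (x - c / L)) ^ 2 =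
      c * (z - x) + L / 2 * (z - x) ^ 2 := by
  field_simp
  ring

theorem L_stationary_is_basic_general {n : ℕ}
    (g : EuclideanSpace ℝ (Fin n) → EuclideanSpace ℝ (Fin n))
    (L lam ρ : ℝ) (hL : 0 < L) (hlam : 0 < lam) (hρ : 0 < ρ)
    (xs : EuclideanSpace ℝ (Fin n))
    (hstat : ∀ z : EuclideanSpace ℝ (Fin n), (∀ i, |z i| ≤ ρ) →
      ⟪g xs, xs - xs⟫ + L / 2 * ‖xs - xs‖ ^ 2 + lam * l0norm xs ≤
        ⟪g xs, z - xs⟫ + L / 2 * ‖z - xs‖ ^ 2 + lam * l0norm z) :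
    ∀ z : EuclideanSpace ℝ (Fin n), (∀ i, |z i| ≤ ρ) →
      ∑ i ∈ Finset.univ.filter (fun i => xs i ≠ 0),
          L / 2 * (xs i - (xs i - g xs i / L)) ^ 2 ≤
        ∑ i ∈ Finset.univ.filter (fun i => xs i ≠ 0),
          L / 2 * (z i - (xs i - g xs i / L)) ^ 2 := by
  intro z hz
  set w := restrictToSupport xs z
  have hoff : ∀ i ∉ Finset.univ.filter (fun i => xs i ≠ 0), (w - xs) i = 0 := fun i hi =>
    restrictToSupport_sub_apply_of_eq_zero xs z (by simpa using hi)
  have hl0 : lam * l0norm w ≤ lam * l0norm xs :=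
    mul_le_mul_of_nonneg_left (by exact_mod_cast l0norm_restrictToSupport_le xs z) hlam.le
  have hdescent : 0 ≤ ⟪g xs, w - xs⟫ + L / 2 * ‖w - xs‖ ^ 2 := by
    have := hstat w (abs_restrictToSupport_le xs z hρ.le hz)
    simp only [sub_self, inner_zero_right, norm_zero] at this
    linarith
  rw [inner_eq_sum_of_eq_zero_off _ hoff, norm_sq_eq_sum_of_eq_zero_off hoff, Finset.mul_sum,
    ← Finset.sum_add_distrib] at hdescent
  rw [← sub_nonneg, ← Finset.sum_sub_distrib]
  refine hdescent.trans_eq (Finset.sum_congr rfl fun i hi => ?_)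
  rw [restrictToSupport_sub_apply_of_ne_zero xs z (by simpa using hi),
    half_mul_sq_sub_shift_sub L _ _ _ hL.ne']

/-- Every `L`-stationary point of `min f(x) + λ‖x‖₀ + I_{[-ρ1,ρ1]}(x)` is a basic
stationary point: `x̀_S` minimizes `z_S ↦ (L/2)‖z_S - (x̀ - ∇f(x̀)/L)_S‖²` over the box,
where `S = {i : x̀ᵢ ≠ 0}`. -/
theorem L_stationary_is_basic {n : ℕ}
    (f : EuclideanSpace ℝ (Fin n) → ℝ) (g : EuclideanSpace ℝ (Fin n) → EuclideanSpace ℝ (Fin n))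
    (L lam ρ : ℝ) (hL : 0 < L) (hlam : 0 < lam) (hρ : 0 < ρ)
    (hgrad : ∀ x, HasGradientAt f (g x) x)
    (hlip : ∀ x y, ‖g x - g y‖ ≤ L * ‖x - y‖)
    (xs : EuclideanSpace ℝ (Fin n)) (hxbox : ∀ i, |xs i| ≤ ρ)
    (hstat : ∀ z : EuclideanSpace ℝ (Fin n), (∀ i, |z i| ≤ ρ) →
      ⟪g xs, xs - xs⟫ + L / 2 * ‖xs - xs‖ ^ 2 + lam * l0norm xs ≤
        ⟪g xs, z - xs⟫ + L / 2 * ‖z - xs‖ ^ 2 + lam * l0norm z) :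
    ∀ z : EuclideanSpace ℝ (Fin n), (∀ i, |z i| ≤ ρ) →
      ∑ i ∈ Finset.univ.filter (fun i => xs i ≠ 0),
          L / 2 * (xs i - (xs i - g xs i / L)) ^ 2 ≤
        ∑ i ∈ Finset.univ.filter (fun i => xs i ≠ 0),
          L / 2 * (z i - (xs i - g xs i / L)) ^ 2 :=
  L_stationary_is_basic_general g L lam ρ hL hlam hρ xs hstat
end

section
/- Every block-1 stationary point of min_x f(x) + h(x) (h the binary indicator or the sparse penalty) is an L-stationary point, where block-1 stationarity means x̄ minimizes F along every single coordinate direction. -/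
open RealInnerProductSpace

/-!
Both penalties are separable, `h x = ∑ⱼ φ (x j)` with every coordinate constrained to a set
`C ⊆ ℝ`. Moving only coordinate `i` of `x̄` to `zᵢ` is then a feasible block-1 move, so by
block-1 stationarity and the coordinatewise descent lemma (with `sᵢ ≤ L`)
`0 ≤ ∇ᵢf(x̄) (zᵢ - x̄ᵢ) + L/2 (zᵢ - x̄ᵢ)² + φ zᵢ - φ x̄ᵢ`.
Summing over `i` is exactly the `L`-stationarity inequality at `z`.
-/

section Coordinates

variable {n : ℕ}

lemma add_single_sub_apply (x z : EuclideanSpace ℝ (Fin n)) (i j : Fin n) :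
    (x + EuclideanSpace.single i (z i - x i)) j = if j = i then z i else x j := by
  by_cases h : j = i <;> simp [h]

lemma sum_comp_add_single_sub (φ : ℝ → ℝ) (x z : EuclideanSpace ℝ (Fin n)) (i : Fin n) :
    ∑ j, φ ((x + EuclideanSpace.single i (z i - x i)) j) =
      ∑ j, φ (x j) + (φ (z i) - φ (x i)) := by
  have hdiff : ∑ j, (φ ((x + EuclideanSpace.single i (z i - x i)) j) - φ (x j)) =
      φ (z i) - φ (x i) := by
    rw [Finset.sum_eq_single i (fun j _ hj => by simp [hj]) (by simp)]
    simp
  rw [Finset.sum_sub_distrib] at hdiff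
  linarith

lemma inner_add_mul_norm_sq_eq_sum (c : ℝ) (v w : EuclideanSpace ℝ (Fin n)) :
    ⟪v, w⟫ + c * ‖w‖ ^ 2 = ∑ i, (v i * w i + c * w i ^ 2) := by
  simp [PiLp.inner_apply, EuclideanSpace.real_norm_sq_eq, Finset.sum_add_distrib,
    Finset.mul_sum, mul_comm]

lemma mul_l0norm_eq_sum (lam : ℝ) (x : EuclideanSpace ℝ (Fin n)) :
    lam * l0norm x = ∑ j, lam * if x j = 0 then 0 else 1 := by
  simp [l0norm, Finset.card_filter, Finset.mul_sum]

end Coordinates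

theorem sum_le_inner_add_sum_of_coordinatewise_min {n : ℕ} {f : EuclideanSpace ℝ (Fin n) → ℝ}
    {x v : EuclideanSpace ℝ (Fin n)} {L : ℝ} {s : Fin n → ℝ} (C : Set ℝ) (φ : ℝ → ℝ)
    (hsL : ∀ i, s i ≤ L)
    (hcoord : ∀ (i : Fin n) (δ : ℝ),
      f (x + EuclideanSpace.single i δ) ≤ f x + δ * v i + s i / 2 * δ ^ 2)
    (hx : ∀ j, x j ∈ C)
    (hmin : ∀ (i : Fin n) (δ : ℝ), (∀ j, (x + EuclideanSpace.single i δ) j ∈ C) →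
      f x + ∑ j, φ (x j) ≤
        f (x + EuclideanSpace.single i δ) + ∑ j, φ ((x + EuclideanSpace.single i δ) j))
    {z : EuclideanSpace ℝ (Fin n)} (hz : ∀ j, z j ∈ C) :
    ∑ j, φ (x j) ≤ ⟪v, z - x⟫ + L / 2 * ‖z - x‖ ^ 2 + ∑ j, φ (z j) := by
  have hgap : ∀ i, 0 ≤ v i * (z i - x i) + L / 2 * (z i - x i) ^ 2 +
      (φ (z i) - φ (x i)) := by
    intro i
    have hfeas : ∀ j, (x + EuclideanSpace.single i (z i - x i)) j ∈ C := fun j => by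
      rw [add_single_sub_apply]
      split_ifs
      exacts [hz i, hx j]
    have hstat := hmin i _ hfeas
    rw [sum_comp_add_single_sub] at hstat
    have hdescent : f (x + EuclideanSpace.single i (z i - x i)) ≤
        f x + (z i - x i) * v i + L / 2 * (z i - x i) ^ 2 := by
      nlinarith [hcoord i (z i - x i), hsL i, sq_nonneg (z i - x i)]
    linarith
  have hsum := Finset.sum_nonneg fun i (_ : i ∈ Finset.univ) => hgap i
  have hmodel := inner_add_mul_norm_sq_eq_sum (L / 2) v (z - x)
  simp only [PiLp.sub_apply] at hmodel
  rw [Finset.sum_add_distrib, Finset.sum_sub_distrib, ← hmodel] at hsum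
  linarith

theorem block1_is_L_stationary_general {n : ℕ}
    (f : EuclideanSpace ℝ (Fin n) → ℝ) (g : EuclideanSpace ℝ (Fin n) → EuclideanSpace ℝ (Fin n))
    (L lam ρ : ℝ)
    (s : Fin n → ℝ) (hsL : ∀ i, s i ≤ L)
    (hcoord : ∀ (x : EuclideanSpace ℝ (Fin n)) (i : Fin n) (δ : ℝ),
      f (x + EuclideanSpace.single i δ) ≤ f x + δ * g x i + s i / 2 * δ ^ 2) :
    -- binary case: h = I_{{-1,1}ⁿ}
    (∀ xb : EuclideanSpace ℝ (Fin n), (∀ i, xb i = -1 ∨ xb i = 1) →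
      (∀ (i : Fin n) (δ : ℝ), (∀ j, (xb + EuclideanSpace.single i δ) j = -1 ∨
          (xb + EuclideanSpace.single i δ) j = 1) →
        f xb ≤ f (xb + EuclideanSpace.single i δ)) →
      ∀ z : EuclideanSpace ℝ (Fin n), (∀ i, z i = -1 ∨ z i = 1) →
        ⟪g xb, xb - xb⟫ + L / 2 * ‖xb - xb‖ ^ 2 ≤ ⟪g xb, z - xb⟫ + L / 2 * ‖z - xb‖ ^ 2) ∧
    -- sparse case: h = λ‖·‖₀ + I_{[-ρ1,ρ1]}
    (∀ xs : EuclideanSpace ℝ (Fin n), (∀ i, |xs i| ≤ ρ) →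
      (∀ (i : Fin n) (δ : ℝ), (∀ j, |(xs + EuclideanSpace.single i δ) j| ≤ ρ) →
        f xs + lam * l0norm xs ≤
          f (xs + EuclideanSpace.single i δ) + lam * l0norm (xs + EuclideanSpace.single i δ)) →
      ∀ z : EuclideanSpace ℝ (Fin n), (∀ i, |z i| ≤ ρ) →
        ⟪g xs, xs - xs⟫ + L / 2 * ‖xs - xs‖ ^ 2 + lam * l0norm xs ≤
          ⟪g xs, z - xs⟫ + L / 2 * ‖z - xs‖ ^ 2 + lam * l0norm z) := by
  simp only [sub_self, inner_zero_right, norm_zero]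
  constructor
  · intro xb hxb hstat z hz
    simpa using sum_le_inner_add_sum_of_coordinatewise_min {t | t = -1 ∨ t = 1} (fun _ => 0)
      hsL (hcoord xb) hxb (by simpa using hstat) hz
  · intro xs hxs hstat z hz
    simp only [mul_l0norm_eq_sum] at hstat ⊢
    simpa using sum_le_inner_add_sum_of_coordinatewise_min {t | |t| ≤ ρ}
      (fun t => lam * if t = 0 then 0 else 1) hsL (hcoord xs) hxs hstat hz

/-- Every block-1 stationary point of `min f(x) + h(x)` (with `h` the binary indicator
or the sparse penalty `λ‖·‖₀ + I_{[-ρ1,ρ1]}`) is an `L`-stationary point. Block-1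
stationarity: `0 ∈ argmin_δ f(x̄ + δeᵢ) + hᵢ(x̄ᵢ + δ)` for every coordinate `i`. -/
theorem block1_is_L_stationary {n : ℕ}
    (f : EuclideanSpace ℝ (Fin n) → ℝ) (g : EuclideanSpace ℝ (Fin n) → EuclideanSpace ℝ (Fin n))
    (L lam ρ : ℝ) (hL : 0 < L) (hlam : 0 < lam) (hρ : 0 < ρ)
    (s : Fin n → ℝ) (hsL : ∀ i, s i ≤ L)
    (hconv : ConvexOn ℝ Set.univ f)
    (hgrad : ∀ x, HasGradientAt f (g x) x)
    (hlip : ∀ x y, ‖g x - g y‖ ≤ L * ‖x - y‖)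
    (hcoord : ∀ (x : EuclideanSpace ℝ (Fin n)) (i : Fin n) (δ : ℝ),
      f (x + EuclideanSpace.single i δ) ≤ f x + δ * g x i + s i / 2 * δ ^ 2) :
    -- binary case: h = I_{{-1,1}ⁿ}
    (∀ xb : EuclideanSpace ℝ (Fin n), (∀ i, xb i = -1 ∨ xb i = 1) →
      (∀ (i : Fin n) (δ : ℝ), (∀ j, (xb + EuclideanSpace.single i δ) j = -1 ∨
          (xb + EuclideanSpace.single i δ) j = 1) →
        f xb ≤ f (xb + EuclideanSpace.single i δ)) →
      ∀ z : EuclideanSpace ℝ (Fin n), (∀ i, z i = -1 ∨ z i = 1) →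
        ⟪g xb, xb - xb⟫ + L / 2 * ‖xb - xb‖ ^ 2 ≤ ⟪g xb, z - xb⟫ + L / 2 * ‖z - xb‖ ^ 2) ∧
    -- sparse case: h = λ‖·‖₀ + I_{[-ρ1,ρ1]}
    (∀ xs : EuclideanSpace ℝ (Fin n), (∀ i, |xs i| ≤ ρ) →
      (∀ (i : Fin n) (δ : ℝ), (∀ j, |(xs + EuclideanSpace.single i δ) j| ≤ ρ) →
        f xs + lam * l0norm xs ≤
          f (xs + EuclideanSpace.single i δ) + lam * l0norm (xs + EuclideanSpace.single i δ)) →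
      ∀ z : EuclideanSpace ℝ (Fin n), (∀ i, |z i| ≤ ρ) →
        ⟪g xs, xs - xs⟫ + L / 2 * ‖xs - xs‖ ^ 2 + lam * l0norm xs ≤
          ⟪g xs, z - xs⟫ + L / 2 * ‖z - xs‖ ^ 2 + lam * l0norm z) :=
  block1_is_L_stationary_general f g L lam ρ s hsL hcoord
end

section
/- If k₁ ≥ k₂, then every block-k₁ stationary point of min F(x) is a block-k₂ stationary point, and a block-n stationary point is a global minimizer. -/
/-- `x̄` is a block-`k` stationary point of `F` if for every coordinate subset `B` of
size `k`, `x̄` minimizes `F` over `{z : zᵢ = x̄ᵢ for i ∉ B}`. -/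
def IsBlockStationary {n : ℕ} (F : (Fin n → ℝ) → EReal) (k : ℕ) (xbar : Fin n → ℝ) : Prop :=
  ∀ B : Finset (Fin n), B.card = k →
    ∀ z : Fin n → ℝ, (∀ i ∉ B, z i = xbar i) → F xbar ≤ F z

/-- If `k₁ ≥ k₂` then every block-`k₁` stationary point is block-`k₂` stationary,
and a block-`n` stationary point is a global minimizer. -/
theorem block_stationary_hierarchy {n : ℕ} (F : (Fin n → ℝ) → EReal) :
    (∀ k₁ k₂ : ℕ, k₂ ≤ k₁ → k₁ ≤ n → ∀ xbar : Fin n → ℝ,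
      IsBlockStationary F k₁ xbar → IsBlockStationary F k₂ xbar) ∧
    (∀ xbar : Fin n → ℝ, IsBlockStationary F n xbar → ∀ z : Fin n → ℝ, F xbar ≤ F z) := by
  constructor
  · intro k₁ k₂ hk hn xbar h B hB z hz
    obtain ⟨B', hBB', hB'⟩ := Finset.exists_superset_card_eq (hB ▸ hk)
      (by simpa [Fintype.card_fin] using hn)
    exact h B' hB' z fun i hi => hz i fun hiB => hi (hBB' hiB)
  · intro xbar h z
    exact h Finset.univ (by simp) z (by simp)
end
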